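/- arXiv:2501.14920 — 2 statements merged into one kernel-verified Lean document; each statement's English description precedes it below -/
import Mathlib

section
/- With notation as above, E[exp(-‖φ‖²_{H^{n-1/2}})] = 0 in the sense that the infinite product Π_{j∈ℤ} ⟨j⟩/(1+⟨j⟩) diverges to 0; hence the Gaussian measure μₙ assigns zero mass to H^{(2n-1)/2}(𝕋), i.e. μₙ(H^{n-1/2}) = 0. -/
open MeasureTheory ProbabilityTheory Real Filter
open scoped ENNReal

/-- The Japanese bracket `⟨x⟩ = √(1+x²)` of an integer. -/
noncomputable def jap (j : ℤ) : ℝ := Real.sqrt (1 + (j : ℝ) ^ 2)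

-- telescoping product
lemma aux_tele (M : ℕ) : ∏ i ∈ Finset.range M, ((i : ℝ) + 2) / ((i : ℝ) + 3) = 2 / (M + 2) := by
  induction M with
  | zero => norm_num
  | succ m ih =>
    rw [Finset.prod_range_succ, ih]
    push_cast
    have h1 : (m : ℝ) + 2 ≠ 0 := by positivity
    have h2 : (m : ℝ) + 3 ≠ 0 := by positivity
    field_simp
    ring

-- product over a subset is at least as big when all factors in [0,1]
lemma aux_prod_subset {f : ℤ → ℝ} (h0 : ∀ j, 0 ≤ f j) (h1 : ∀ j, f j ≤ 1)
    {s t : Finset ℤ} (hst : s ⊆ t) : ∏ j ∈ t, f j ≤ ∏ j ∈ s, f j := by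
  rw [← Finset.prod_sdiff hst]
  have hA : ∏ j ∈ t \ s, f j ≤ 1 := Finset.prod_le_one (fun i _ => h0 i) (fun i _ => h1 i)
  have hB : 0 ≤ ∏ j ∈ s, f j := Finset.prod_nonneg fun i _ => h0 i
  calc (∏ j ∈ t \ s, f j) * ∏ j ∈ s, f j ≤ 1 * ∏ j ∈ s, f j := by
        exact mul_le_mul_of_nonneg_right hA hB
    _ = ∏ j ∈ s, f j := one_mul _

-- embedding of range M into Icc (-M) M
lemma aux_map_subset (M : ℕ) :
    ((Finset.range M).map ⟨fun i : ℕ => (i : ℤ) + 1, fun a b h => by simpa using h⟩)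
      ⊆ Finset.Icc (-(M : ℤ)) (M : ℤ) := by
  intro j hj
  simp only [Finset.mem_map, Finset.mem_range, Function.Embedding.coeFn_mk] at hj
  obtain ⟨i, hi, rfl⟩ := hj
  simp only [Finset.mem_Icc]
  show -(M : ℤ) ≤ (i : ℤ) + 1 ∧ (i : ℤ) + 1 ≤ M
  constructor <;> omega

lemma aux_prod_Icc_le {f : ℤ → ℝ} (h0 : ∀ j, 0 ≤ f j) (h1 : ∀ j, f j ≤ 1) (M : ℕ) :
    ∏ j ∈ Finset.Icc (-(M : ℤ)) (M : ℤ), f j ≤ ∏ i ∈ Finset.range M, f ((i : ℤ) + 1) := by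
  have := aux_prod_subset h0 h1 (aux_map_subset M)
  rwa [Finset.prod_map] at this

lemma jap_pos (j : ℤ) : 0 < jap j := Real.sqrt_pos.mpr (by positivity)

lemma jap_le (i : ℕ) : jap ((i : ℤ) + 1) ≤ (i : ℝ) + 2 := by
  rw [jap]
  have : Real.sqrt (((i : ℝ) + 2) ^ 2) = (i : ℝ) + 2 := Real.sqrt_sq (by positivity)
  rw [← this]
  apply Real.sqrt_le_sqrt
  push_cast
  nlinarith [Nat.cast_nonneg (α := ℝ) i]

lemma part1 : Tendsto (fun M : ℕ => ∏ j ∈ Finset.Icc (-(M : ℤ)) (M : ℤ), jap j / (1 + jap j))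
    atTop (nhds 0) := by
  have h0 : ∀ j : ℤ, 0 ≤ jap j / (1 + jap j) := fun j =>
    div_nonneg (jap_pos j).le (by linarith [jap_pos j])
  have h1 : ∀ j : ℤ, jap j / (1 + jap j) ≤ 1 := fun j => by
    rw [div_le_one (by linarith [jap_pos j])]; linarith
  have hstep : ∀ i : ℕ, jap ((i : ℤ) + 1) / (1 + jap ((i : ℤ) + 1)) ≤ ((i : ℝ) + 2) / ((i : ℝ) + 3) := by
    intro i
    have hj := jap_pos ((i : ℤ) + 1)
    have hle := jap_le i
    rw [div_le_div_iff₀ (by linarith) (by positivity)]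
    nlinarith
  have hbound : ∀ M : ℕ, ∏ j ∈ Finset.Icc (-(M : ℤ)) (M : ℤ), jap j / (1 + jap j) ≤ 2 / (M + 2) := by
    intro M
    calc ∏ j ∈ Finset.Icc (-(M : ℤ)) (M : ℤ), jap j / (1 + jap j)
        ≤ ∏ i ∈ Finset.range M, jap ((i : ℤ) + 1) / (1 + jap ((i : ℤ) + 1)) :=
          aux_prod_Icc_le h0 h1 M
      _ ≤ ∏ i ∈ Finset.range M, ((i : ℝ) + 2) / ((i : ℝ) + 3) :=
          Finset.prod_le_prod (fun i _ => h0 _) (fun i _ => hstep i)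
      _ = 2 / (M + 2) := aux_tele M
  have hlim : Tendsto (fun M : ℕ => 2 / ((M : ℝ) + 2)) atTop (nhds 0) :=
    Tendsto.div_atTop tendsto_const_nhds
      (tendsto_atTop_add_const_right _ _ tendsto_natCast_atTop_atTop)
  refine squeeze_zero (fun M => Finset.prod_nonneg fun j _ => h0 j) hbound hlim

lemma aux_indep_prod {Ω : Type*} [MeasurableSpace Ω] (P : Measure Ω) [IsProbabilityMeasure P]
    (h : ℤ → Ω → ℝ) (hm : ∀ j, Measurable (h j))
    (hind : iIndepFun h P) (s : Finset ℤ) :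
    ∫ ω, ∏ j ∈ s, h j ω ∂P = ∏ j ∈ s, ∫ ω, h j ω ∂P := by
  induction s using Finset.induction with
  | empty => simp
  | insert i s hi ih =>
    have hIF : IndepFun (∏ j ∈ s, h j) (h i) P :=
      hind.indepFun_finsetProd_of_notMem hm hi
    have hps : Measurable (∏ j ∈ s, h j) := by
      rw [Finset.prod_fn]
      exact Finset.measurable_prod s fun j _ => hm j
    have := hIF.symm.integral_mul_eq_mul_integral (hm i).aestronglyMeasurable hps.aestronglyMeasurable
    rw [Finset.prod_insert hi, ← ih]
    have heq : (∫ ω, ∏ j ∈ insert i s, h j ω ∂P) = ∫ ω, (h i * ∏ j ∈ s, h j) ω ∂P := by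
      congr 1; ext ω; simp [Finset.prod_insert hi, Finset.prod_apply]
    rw [heq, this]
    congr 1
    exact congrArg (integral P) (funext fun ω => by simp [Finset.prod_apply])

noncomputable def cc (n : ℕ) (j : ℤ) : ℝ :=
  (1 + (j : ℝ) ^ 2) ^ ((2 * (n : ℝ) - 1) / 2) / (2 * π * (1 + (j : ℝ) ^ (2 * n)))

lemma aux_denom_pos (n : ℕ) (j : ℤ) : 0 < 2 * π * (1 + (j : ℝ) ^ (2 * n)) := by
  have h1 : (0 : ℝ) ≤ (j : ℝ) ^ (2 * n) := by rw [pow_mul]; positivity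
  have h2 := Real.pi_pos
  nlinarith

lemma cc_pos (n : ℕ) (j : ℤ) : 0 < cc n j :=
  div_pos (Real.rpow_pos_of_pos (by positivity) _) (aux_denom_pos n j)

lemma cc_lower {n : ℕ} (hn : 2 ≤ n) {j : ℤ} (hj : 1 ≤ j) :
    1 / (4 * π * (j : ℝ)) ≤ cc n j := by
  have hx : (1 : ℝ) ≤ (j : ℝ) := by exact_mod_cast hj
  have hx0 : (0 : ℝ) < (j : ℝ) := by linarith
  have hn2 : (2 : ℝ) ≤ (n : ℝ) := by exact_mod_cast hn
  have he : 0 ≤ (2 * (n : ℝ) - 1) / 2 := by linarith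
  have hπ := Real.pi_pos
  set x := (j : ℝ)
  -- numerator lower bound
  have hnum : x ^ (2 * n - 1) ≤ (1 + x ^ 2) ^ ((2 * (n : ℝ) - 1) / 2) := by
    have h1 : (x ^ 2) ^ ((2 * (n : ℝ) - 1) / 2) ≤ (1 + x ^ 2) ^ ((2 * (n : ℝ) - 1) / 2) :=
      Real.rpow_le_rpow (by positivity) (by linarith) he
    refine le_trans (le_of_eq ?_) h1
    rw [show ((x:ℝ) ^ 2) = x ^ ((2:ℕ):ℝ) from (Real.rpow_natCast x 2).symm,
      ← Real.rpow_mul (by linarith : (0:ℝ) ≤ x), ← Real.rpow_natCast x (2 * n - 1)]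
    congr 1
    have h21 : (1 : ℕ) ≤ 2 * n := by omega
    push_cast [Nat.cast_sub h21]
    ring_nf
  -- denominator upper bound
  have hden : 2 * π * (1 + x ^ (2 * n)) ≤ 4 * π * x ^ (2 * n) := by
    have h1 : (1 : ℝ) ≤ x ^ (2 * n) := one_le_pow₀ hx
    nlinarith
  have key : x ^ (2 * n - 1) / (4 * π * x ^ (2 * n)) ≤ cc n j := by
    apply div_le_div₀ (le_trans (by positivity) hnum) hnum (aux_denom_pos n j) hden
  refine le_trans (le_of_eq ?_) key
  have hpow : x ^ (2 * n) = x ^ (2 * n - 1) * x := by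
    rw [← pow_succ]
    congr 1
    omega
  rw [hpow]
  have hxp : (0 : ℝ) < x ^ (2 * n - 1) := by positivity
  field_simp

lemma aux_mono_div {a b : ℝ} (ha : 0 ≤ a) (hab : a ≤ b) : a / (1 + a) ≤ b / (1 + b) := by
  rw [div_le_div_iff₀ (by linarith) (by linarith)]
  nlinarith

lemma aux_step {n : ℕ} (hn : 2 ≤ n) (i : ℕ) :
    1 / (1 + cc n ((i : ℤ) + 1)) ≤ Real.exp (-(1 / ((4 * π + 1) * ((i : ℝ) + 1)))) := by
  have hπ := Real.pi_pos
  set c := cc n ((i : ℤ) + 1) with hc_def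
  have hc : 0 < c := cc_pos n _
  have hx : (1 : ℝ) ≤ (i : ℝ) + 1 := by have := Nat.cast_nonneg (α := ℝ) i; linarith
  have hcl : 1 / (4 * π * ((i : ℝ) + 1)) ≤ c := by
    have := cc_lower hn (by omega : (1 : ℤ) ≤ (i : ℤ) + 1)
    push_cast at this
    exact this
  set L : ℝ := 1 / ((4 * π + 1) * ((i : ℝ) + 1)) with hL_def
  have hy0 : (0 : ℝ) ≤ 1 / (4 * π * ((i : ℝ) + 1)) := by positivity
  have hd : L ≤ c / (1 + c) := by
    have h1 : (1 / (4 * π * ((i : ℝ) + 1))) / (1 + 1 / (4 * π * ((i : ℝ) + 1)))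
        = 1 / (4 * π * ((i : ℝ) + 1) + 1) := by
      have : (0:ℝ) < 4 * π * ((i : ℝ) + 1) := by positivity
      field_simp
    have h2 : L ≤ 1 / (4 * π * ((i : ℝ) + 1) + 1) := by
      rw [hL_def, div_le_div_iff₀ (by positivity) (by positivity)]
      nlinarith
    calc L ≤ 1 / (4 * π * ((i : ℝ) + 1) + 1) := h2
      _ = (1 / (4 * π * ((i : ℝ) + 1))) / (1 + 1 / (4 * π * ((i : ℝ) + 1))) := h1.symm
      _ ≤ c / (1 + c) := aux_mono_div hy0 hcl
  have hone : 1 / (1 + c) = 1 - c / (1 + c) := by field_simp; ring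
  have hexp : 1 - L ≤ Real.exp (-L) := by
    have := Real.add_one_le_exp (-L)
    linarith
  calc 1 / (1 + c) = 1 - c / (1 + c) := hone
    _ ≤ 1 - L := by linarith
    _ ≤ Real.exp (-L) := hexp

lemma aux_p_tendsto {n : ℕ} (hn : 2 ≤ n) :
    Tendsto (fun M : ℕ => ∏ j ∈ Finset.Icc (-(M : ℤ)) (M : ℤ), 1 / (1 + cc n j))
      atTop (nhds 0) := by
  have hπ := Real.pi_pos
  have h0 : ∀ j : ℤ, 0 ≤ 1 / (1 + cc n j) := fun j => by
    have := cc_pos n j; positivity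
  have h1 : ∀ j : ℤ, 1 / (1 + cc n j) ≤ 1 := fun j => by
    have := cc_pos n j
    rw [div_le_one (by linarith)]; linarith
  have hbound : ∀ M : ℕ, ∏ j ∈ Finset.Icc (-(M : ℤ)) (M : ℤ), 1 / (1 + cc n j)
      ≤ Real.exp (-((4 * π + 1)⁻¹ * ∑ i ∈ Finset.range M, (1 / ((i : ℝ) + 1)))) := by
    intro M
    calc ∏ j ∈ Finset.Icc (-(M : ℤ)) (M : ℤ), 1 / (1 + cc n j)
        ≤ ∏ i ∈ Finset.range M, 1 / (1 + cc n ((i : ℤ) + 1)) := aux_prod_Icc_le h0 h1 M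
      _ ≤ ∏ i ∈ Finset.range M, Real.exp (-(1 / ((4 * π + 1) * ((i : ℝ) + 1)))) :=
          Finset.prod_le_prod (fun i _ => h0 _) (fun i _ => aux_step hn i)
      _ = Real.exp (∑ i ∈ Finset.range M, -(1 / ((4 * π + 1) * ((i : ℝ) + 1)))) :=
          (Real.exp_sum _ _).symm
      _ = Real.exp (-((4 * π + 1)⁻¹ * ∑ i ∈ Finset.range M, (1 / ((i : ℝ) + 1)))) := by
          congr 1
          rw [Finset.mul_sum, ← Finset.sum_neg_distrib]
          refine Finset.sum_congr rfl fun i _ => ?_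
          rw [one_div, mul_inv]
          ring
  have hsum : Tendsto (fun M : ℕ => (4 * π + 1)⁻¹ * ∑ i ∈ Finset.range M, (1 / ((i : ℝ) + 1)))
      atTop atTop := by
    apply Tendsto.const_mul_atTop (by positivity)
    exact Real.tendsto_sum_range_one_div_nat_succ_atTop
  have hexp : Tendsto (fun M : ℕ =>
      Real.exp (-((4 * π + 1)⁻¹ * ∑ i ∈ Finset.range M, (1 / ((i : ℝ) + 1)))))
      atTop (nhds 0) :=
    Real.tendsto_exp_atBot.comp (tendsto_neg_atBot_iff.mpr hsum)
  exact squeeze_zero (fun M => Finset.prod_nonneg fun j _ => h0 j) hbound hexp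

/-- `μₙ(H^{n-1/2}) = 0`: for i.i.d. standard complex Gaussians `gⱼ` (encoded via
`E[e^{-λ|gⱼ|²}] = 1/(1+λ)` and independence), the partial products
`Π_{|j|≤M} ⟨j⟩/(1+⟨j⟩)` tend to `0`, and the random series
`φ = Σⱼ gⱼ(2π(1+j^{2n}))^{-1/2}e^{ijx}` almost surely fails to lie in `H^{(2n-1)/2}`:
the set of `ω` for which `Σⱼ ⟨j⟩^{2n-1}|φ̂(j)|²` is summable has probability `0`. -/
theorem gaussian_measure_zero_on_critical_space
    {Ω : Type*} [MeasurableSpace Ω] (P : Measure Ω) [IsProbabilityMeasure P]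
    (g : ℤ → Ω → ℂ) (hmeas : ∀ j, Measurable (g j))
    (hindep : iIndepFun g P)
    (hlaplace : ∀ j : ℤ, ∀ lam : ℝ, 0 < lam →
      ∫ ω, Real.exp (-lam * ‖g j ω‖ ^ 2) ∂P = 1 / (1 + lam))
    (n : ℕ) (hn : 2 ≤ n) :
    Tendsto (fun M : ℕ => ∏ j ∈ Finset.Icc (-(M : ℤ)) (M : ℤ), jap j / (1 + jap j))
        atTop (nhds 0)
    ∧ P {ω | Summable fun j : ℤ =>
        (1 + (j : ℝ) ^ 2) ^ ((2 * (n : ℝ) - 1) / 2) * ‖g j ω‖ ^ 2 /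
          (2 * π * (1 + (j : ℝ) ^ (2 * n)))} = 0 := by
  refine ⟨part1, ?_⟩
  -- notation
  set T : ℤ → Ω → ℝ := fun j ω => cc n j * ‖g j ω‖ ^ 2 with hT_def
  have hT_nonneg : ∀ j ω, 0 ≤ T j ω := fun j ω => by
    have := cc_pos n j; positivity
  have hTmeas : ∀ j, Measurable (T j) := fun j =>
    (((hmeas j).norm.pow_const 2).const_mul (cc n j))
  set G : Ω → ℝ≥0∞ := fun ω => ∑' j, ENNReal.ofReal (T j ω) with hG_def
  have hGmeas : Measurable G := Measurable.ennreal_tsum fun j => (hTmeas j).ennreal_ofReal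
  set A : Set Ω := {ω | G ω ≠ ∞} with hA_def
  have hA : MeasurableSet A := (hGmeas (measurableSet_singleton ∞)).compl
  -- the target set equals A
  have hset : {ω | Summable fun j : ℤ =>
        (1 + (j : ℝ) ^ 2) ^ ((2 * (n : ℝ) - 1) / 2) * ‖g j ω‖ ^ 2 /
          (2 * π * (1 + (j : ℝ) ^ (2 * n)))} = A := by
    ext ω
    have hfun : (fun j : ℤ =>
        (1 + (j : ℝ) ^ 2) ^ ((2 * (n : ℝ) - 1) / 2) * ‖g j ω‖ ^ 2 /
          (2 * π * (1 + (j : ℝ) ^ (2 * n)))) = fun j => T j ω := by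
      funext j
      simp only [hT_def, cc]
      ring
    simp only [Set.mem_setOf_eq, hfun, hA_def]
    constructor
    · intro hs
      show (∑' (j : ℤ), ENNReal.ofReal (T j ω)) ≠ ⊤
      rw [← ENNReal.ofReal_tsum_of_nonneg (fun j => hT_nonneg j ω) hs]
      exact ENNReal.ofReal_ne_top
    · intro hG
      have h1 : Summable fun j => (ENNReal.ofReal (T j ω)).toReal :=
        ENNReal.summable_toReal hG
      have h2 : (fun j => (ENNReal.ofReal (T j ω)).toReal) = fun j => T j ω := by
        funext j
        exact ENNReal.toReal_ofReal (hT_nonneg j ω)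
      rwa [h2] at h1
  rw [hset]
  -- the auxiliary function f
  set f : Ω → ℝ := A.indicator (fun ω => Real.exp (-(G ω).toReal)) with hf_def
  have hfmeas : Measurable f :=
    (Real.measurable_exp.comp hGmeas.ennreal_toReal.neg).indicator hA
  have hf_nonneg : ∀ ω, 0 ≤ f ω := fun ω => by
    rw [hf_def]
    by_cases h : ω ∈ A
    · rw [Set.indicator_of_mem h]; exact (Real.exp_pos _).le
    · rw [Set.indicator_of_notMem h]
  have hf_le_one : ∀ ω, f ω ≤ 1 := fun ω => by
    rw [hf_def]
    by_cases h : ω ∈ A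
    · rw [Set.indicator_of_mem h]
      exact Real.exp_le_one_iff.mpr (by simp)
    · rw [Set.indicator_of_notMem h]; norm_num
  -- integrability helper
  have int_of : ∀ F : Ω → ℝ, Measurable F → (∀ ω, 0 ≤ F ω) → (∀ ω, F ω ≤ 1) →
      Integrable F P := by
    intro F hF h0 h1
    refine Integrable.mono' (integrable_const 1) hF.aestronglyMeasurable ?_
    refine Filter.Eventually.of_forall fun ω => ?_
    rw [Real.norm_eq_abs, abs_of_nonneg (h0 ω)]
    exact h1 ω
  have hf_int : Integrable f P := int_of f hfmeas hf_nonneg hf_le_one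
  -- the product functions
  set h : ℤ → Ω → ℝ := fun j ω => Real.exp (-cc n j * ‖g j ω‖ ^ 2) with hh_def
  have hhmeas : ∀ j, Measurable (h j) := fun j =>
    Real.measurable_exp.comp (((hmeas j).norm.pow_const 2).const_mul (-cc n j))
  have hh_indep : iIndepFun h P := by
    have := hindep.comp (fun j (z : ℂ) => Real.exp (-cc n j * ‖z‖ ^ 2))
      (fun j => Real.measurable_exp.comp
        ((measurable_norm.pow_const 2).const_mul (-cc n j)))
    exact this
  have hh01 : ∀ j ω, 0 ≤ h j ω ∧ h j ω ≤ 1 := fun j ω => by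
    constructor
    · exact (Real.exp_pos _).le
    · refine Real.exp_le_one_iff.mpr ?_
      have := cc_pos n j
      have h2 : (0:ℝ) ≤ ‖g j ω‖ ^ 2 := by positivity
      nlinarith
  -- the key integral identity
  have hprod : ∀ M : ℕ, ∫ ω, ∏ j ∈ Finset.Icc (-(M : ℤ)) (M : ℤ), h j ω ∂P
      = ∏ j ∈ Finset.Icc (-(M : ℤ)) (M : ℤ), 1 / (1 + cc n j) := by
    intro M
    rw [aux_indep_prod P h hhmeas hh_indep]
    refine Finset.prod_congr rfl fun j _ => ?_
    rw [hh_def]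
    exact hlaplace j (cc n j) (cc_pos n j)
  -- pointwise bound f ≤ ∏ h
  have hptwise : ∀ M : ℕ, ∀ ω, f ω ≤ ∏ j ∈ Finset.Icc (-(M : ℤ)) (M : ℤ), h j ω := by
    intro M ω
    by_cases hω : ω ∈ A
    · rw [hf_def, Set.indicator_of_mem hω]
      have hsum_le : ∑ j ∈ Finset.Icc (-(M : ℤ)) (M : ℤ), T j ω ≤ (G ω).toReal := by
        have h1 : ENNReal.ofReal (∑ j ∈ Finset.Icc (-(M : ℤ)) (M : ℤ), T j ω)
            = ∑ j ∈ Finset.Icc (-(M : ℤ)) (M : ℤ), ENNReal.ofReal (T j ω) :=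
          ENNReal.ofReal_sum_of_nonneg fun j _ => hT_nonneg j ω
        have h2 : ∑ j ∈ Finset.Icc (-(M : ℤ)) (M : ℤ), ENNReal.ofReal (T j ω) ≤ G ω :=
          ENNReal.sum_le_tsum _
        have h3 := ENNReal.toReal_mono hω (h1 ▸ h2)
        rwa [ENNReal.toReal_ofReal (Finset.sum_nonneg fun j _ => hT_nonneg j ω)] at h3
      calc Real.exp (-(G ω).toReal)
          ≤ Real.exp (-(∑ j ∈ Finset.Icc (-(M : ℤ)) (M : ℤ), T j ω)) :=
            Real.exp_le_exp.mpr (by linarith)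
        _ = ∏ j ∈ Finset.Icc (-(M : ℤ)) (M : ℤ), h j ω := by
            rw [← Finset.sum_neg_distrib, Real.exp_sum]
            refine Finset.prod_congr rfl fun j _ => ?_
            rw [hh_def, hT_def]
            congr 1
            ring
    · rw [hf_def, Set.indicator_of_notMem hω]
      exact Finset.prod_nonneg fun j _ => (hh01 j ω).1
  -- conclude ∫ f = 0
  have hIf_le : ∀ M : ℕ, ∫ ω, f ω ∂P ≤ ∏ j ∈ Finset.Icc (-(M : ℤ)) (M : ℤ), 1 / (1 + cc n j) := by
    intro M
    rw [← hprod M]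
    refine integral_mono hf_int ?_ (hptwise M)
    refine int_of _ (Finset.measurable_prod _ fun j _ => hhmeas j) ?_ ?_
    · intro ω; exact Finset.prod_nonneg fun j _ => (hh01 j ω).1
    · intro ω; exact Finset.prod_le_one (fun j _ => (hh01 j ω).1) (fun j _ => (hh01 j ω).2)
  have hIf0 : ∫ ω, f ω ∂P = 0 := by
    refine le_antisymm ?_ (integral_nonneg hf_nonneg)
    exact ge_of_tendsto (aux_p_tendsto hn) (Filter.Eventually.of_forall hIf_le)
  have hf_ae : f =ᵐ[P] 0 := (integral_eq_zero_iff_of_nonneg hf_nonneg hf_int).mp hIf0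
  have hnull : P {ω | f ω ≠ 0} = 0 := by
    have := hf_ae
    rwa [Filter.EventuallyEq, ae_iff] at this
  refine measure_mono_null ?_ hnull
  intro ω hω
  simp only [Set.mem_setOf_eq]
  rw [hf_def, Set.indicator_of_mem hω]
  exact (Real.exp_pos _).ne'
end

section
/- Symmetry cancellation: let j, j₁, j₃, j₄, j₅ be integers with j₁ − j − j₃ + j₄ − j₅ + j = 0 and all five of j₁, j₃, j₄, j₅, j distinct. For complex numbers g_{j₁}, g_{j₃}, g_{j₄}, g_{j₅}, g_j, the sum of the two terms Im[ a·|g_j|² g_{j₁} conj(g_{j₃}) g_{j₄} conj(g_{j₅}) ] + Im[ b·|g_j|² g_{j₅} conj(g_{j₄}) g_{j₃} conj(g_{j₁}) ] vanishes, where a = (j₁−j−j₃)(j₄−j₅+j) j / W and b = (j₅−j−j₄)(j₃−j₁+j) j / W with W = ⟨j²⟩²⟨j₁²⟩⟨j₃²⟩⟨j₄²⟩⟨j₅²⟩. -/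
open Real Complex

/-- Pairwise symmetry cancellation from Lemma 4.4: under the linear constraint
`j₁ − j − j₃ + j₄ − j₅ + j = 0` with the five indices distinct, the two paired
contributions to the imaginary part cancel. Here
`W = ⟨j²⟩²⟨j₁²⟩⟨j₃²⟩⟨j₄²⟩⟨j₅²⟩` with `⟨x⟩ = √(1+x²)`. -/
theorem symmetry_cancellation
    (j j₁ j₃ j₄ j₅ : ℤ)
    (hconstraint : j₁ - j - j₃ + j₄ - j₅ + j = 0)
    (hdistinct : ([j₁, j₃, j₄, j₅, j] : List ℤ).Nodup)
    (g₁ g₃ g₄ g₅ gj : ℂ)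
    (W a b : ℝ)
    (hW : W = Real.sqrt (1 + ((j : ℝ) ^ 2) ^ 2) ^ 2 * Real.sqrt (1 + ((j₁ : ℝ) ^ 2) ^ 2) *
      Real.sqrt (1 + ((j₃ : ℝ) ^ 2) ^ 2) * Real.sqrt (1 + ((j₄ : ℝ) ^ 2) ^ 2) *
      Real.sqrt (1 + ((j₅ : ℝ) ^ 2) ^ 2))
    (ha : a = (((j₁ - j - j₃) * (j₄ - j₅ + j) * j : ℤ) : ℝ) / W)
    (hb : b = (((j₅ - j - j₄) * (j₃ - j₁ + j) * j : ℤ) : ℝ) / W) :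
    ((a : ℂ) * ((‖gj‖ : ℂ) ^ 2) * g₁ * (starRingEnd ℂ) g₃ * g₄ * (starRingEnd ℂ) g₅).im
      + ((b : ℂ) * ((‖gj‖ : ℂ) ^ 2) * g₅ * (starRingEnd ℂ) g₄ * g₃ * (starRingEnd ℂ) g₁).im
      = 0 := by
  have hba : b = a := by
    rw [ha, hb]
    congr 2
    have h4 : j₄ = j₅ + j₃ - j₁ := by omega
    subst h4; ring
  rw [hba]
  have key : ((a : ℂ) * ((‖gj‖ : ℂ) ^ 2) * g₅ * (starRingEnd ℂ) g₄ * g₃ * (starRingEnd ℂ) g₁)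
      = (starRingEnd ℂ) ((a : ℂ) * ((‖gj‖ : ℂ) ^ 2) * g₁ * (starRingEnd ℂ) g₃ * g₄ *
        (starRingEnd ℂ) g₅) := by
    simp only [map_mul, Complex.conj_conj, Complex.conj_ofReal, map_pow]
    ring
  rw [key, Complex.conj_im]
  ring
end
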